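/- arXiv:1907.01794 — 5 statements merged into one kernel-verified Lean document; each statement's English description precedes it below -/
import Mathlib

section
/- Let (f_k)_{k≥0} be a real sequence, let (η_k)_{k≥0} satisfy 0 < η_k ≤ 1 for all k, and define Q_0 = 1, Q_{k+1} = η_k Q_k + 1, C_0 = f_0, C_{k+1} = (η_k Q_k C_k + f_{k+1})/Q_{k+1}. Assume that for every k the nonmonotone line search condition f_{k+1} ≤ C_k holds. Then for every k, f_k ≤ C_k ≤ A_k, where A_k = (1/(k+1)) ∑_{i=0}^{k} f_i is the arithmetic mean of the first k+1 function values. (This is Lemma 4.1.) -/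
/-!
`Q_{k+1} = η_k Q_k + 1` with `η_k ∈ (0, 1]` gives `1 ≤ Q_k ≤ k + 1`, and `C_{k+1}` is the convex
combination of `C_k` and `f_{k+1}` with weights `η_k Q_k : 1`. Since `f_{k+1} ≤ C_k`, this places
`C_{k+1}` between `f_{k+1}` and `C_k`; moreover shifting weight onto the larger value `C_k` can only
increase the combination, so raising the weight `η_k Q_k` to `k + 1` bounds `C_{k+1}` by
`((k + 1) C_k + f_{k+1}) / (k + 2)`, which by induction is at most `A_{k+1}`.
-/

section WeightedMean

variable {s t a b : ℝ}

lemma le_weightedMean (hs : 0 ≤ s) (hab : a ≤ b) : a ≤ (s * b + a) / (s + 1) := by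
  rw [le_div_iff₀ (by linarith)]
  nlinarith

lemma weightedMean_mono (hs : 0 ≤ s) (hst : s ≤ t) (hab : a ≤ b) :
    (s * b + a) / (s + 1) ≤ (t * b + a) / (t + 1) := by
  rw [div_le_div_iff₀ (by linarith) (by linarith)]
  nlinarith

end WeightedMean

lemma sum_range_succ_div_succ (f : ℕ → ℝ) (k : ℕ) :
    (∑ i ∈ Finset.range (k + 1 + 1), f i) / ((k : ℝ) + 1 + 1)
      = ((k + 1) * ((∑ i ∈ Finset.range (k + 1), f i) / (k + 1)) + f (k + 1)) / (k + 1 + 1) := by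
  rw [Finset.sum_range_succ, mul_div_cancel₀ _ (by positivity)]

lemma mem_Icc_of_succ_eq_mul_add_one {η Q : ℕ → ℝ} (hη : ∀ k, 0 ≤ η k ∧ η k ≤ 1)
    (hQ0 : Q 0 = 1) (hQ : ∀ k, Q (k + 1) = η k * Q k + 1) (k : ℕ) :
    Q k ∈ Set.Icc 1 ((k : ℝ) + 1) := by
  induction k with
  | zero => simp [hQ0]
  | succ k ih =>
    obtain ⟨hη0, hη1⟩ := hη k
    obtain ⟨hQ1, hQk⟩ := ih
    rw [hQ]
    push_cast
    constructor <;> nlinarith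

/-- Lemma 4.1: in the Zhang–Hager nonmonotone averaging scheme, if the line
search condition `f_{k+1} ≤ C_k` holds for all `k`, then `f_k ≤ C_k ≤ A_k`,
where `A_k` is the arithmetic mean of `f_0, …, f_k`. -/
theorem stmt2 (f η Q C : ℕ → ℝ)
    (hη : ∀ k, 0 < η k ∧ η k ≤ 1)
    (hQ0 : Q 0 = 1) (hQ : ∀ k, Q (k + 1) = η k * Q k + 1)
    (hC0 : C 0 = f 0) (hC : ∀ k, C (k + 1) = (η k * Q k * C k + f (k + 1)) / Q (k + 1))
    (hls : ∀ k, f (k + 1) ≤ C k) :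
    ∀ k, f k ≤ C k ∧ C k ≤ (∑ i ∈ Finset.range (k + 1), f i) / (k + 1) := by
  have hQ_mem := mem_Icc_of_succ_eq_mul_add_one (fun k => ⟨(hη k).1.le, (hη k).2⟩) hQ0 hQ
  have hweight_nonneg (k : ℕ) : 0 ≤ η k * Q k :=
    mul_nonneg (hη k).1.le (zero_le_one.trans (hQ_mem k).1)
  have hC_succ (k : ℕ) : C (k + 1) = (η k * Q k * C k + f (k + 1)) / (η k * Q k + 1) := by
    rw [hC, hQ]
  intro k
  constructor
  · cases k with
    | zero => exact hC0.ge
    | succ k => exact hC_succ k ▸ le_weightedMean (hweight_nonneg k) (hls k)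
  · induction k with
    | zero => simp [hC0]
    | succ k ih =>
      have hweight_le : η k * Q k ≤ k + 1 :=
        (mul_le_of_le_one_left (zero_le_one.trans (hQ_mem k).1) (hη k).2).trans (hQ_mem k).2
      rw [Nat.cast_succ, sum_range_succ_div_succ, hC_succ]
      calc (η k * Q k * C k + f (k + 1)) / (η k * Q k + 1)
          ≤ ((k + 1) * C k + f (k + 1)) / (k + 1 + 1) :=
            weightedMean_mono (hweight_nonneg k) hweight_le (hls k)
        _ ≤ _ := by gcongr
end

section
/- Let n ≥ 1 be an integer, let 0 < c < 1, and define η_k = c if k ≡ n−1 (mod n) and η_k = 1 otherwise. Define Q_0 = 1 and Q_{k+1} = η_k Q_k + 1. Then for every k ≥ 0, Q_{k+1} ≤ 1 + n/(1−c). (This is the bound (31) in the proof of Theorem 4.1.) -/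
lemma stmt5_mod_succ_eq (n k : ℕ) (hn : 1 ≤ n) (h : k % n = n - 1) :
    (k + 1) % n = 0 := by
  by_cases hn1 : n = 1
  · simp [hn1, Nat.mod_one]
  · rw [Nat.add_mod, h, Nat.mod_eq_of_lt (show 1 < n by omega)]
    have hne : n - 1 + 1 = n := by omega
    rw [hne, Nat.mod_self]

lemma stmt5_mod_succ_ne (n k : ℕ) (hn : 1 ≤ n) (h : k % n ≠ n - 1) :
    (k + 1) % n = k % n + 1 := by
  have hlt : k % n < n := Nat.mod_lt _ (by omega)
  by_cases hn1 : n = 1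
  · exfalso; exact h (by simp [hn1, Nat.mod_one])
  · rw [Nat.add_mod, Nat.mod_eq_of_lt (show 1 < n by omega)]
    exact Nat.mod_eq_of_lt (by omega)

/-- The bound (31) in the proof of Theorem 4.1: with the periodic parameters
`η_k = c` if `k ≡ n−1 (mod n)` and `η_k = 1` otherwise, where `0 < c < 1` and
`n ≥ 1`, the sequence `Q_0 = 1`, `Q_{k+1} = η_k Q_k + 1` satisfies
`Q_{k+1} ≤ 1 + n/(1−c)`. -/
theorem stmt5 (n : ℕ) (hn : 1 ≤ n) (c : ℝ) (hc0 : 0 < c) (hc1 : c < 1)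
    (η Q : ℕ → ℝ)
    (hη : ∀ k, η k = if k % n = n - 1 then c else 1)
    (hQ0 : Q 0 = 1) (hQ : ∀ k, Q (k + 1) = η k * Q k + 1) :
    ∀ k, Q (k + 1) ≤ 1 + n / (1 - c) := by
  have h1c : (0:ℝ) < 1 - c := by linarith
  have hn1 : (1:ℝ) ≤ (n:ℝ) := by exact_mod_cast hn
  set A : ℝ := (c*((n:ℝ)-1)+1)/(1-c) with hA
  have hAfix : c*((n:ℝ)-1+A)+1 = A := by
    rw [hA]; field_simp; ring
  have hA1 : (1:ℝ) ≤ A := by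
    rw [hA, le_div_iff₀ h1c]
    nlinarith
  have key : ∀ k, Q k ≤ ((k % n : ℕ) : ℝ) + A := by
    intro k
    induction k with
    | zero =>
      simp [hQ0]
      linarith
    | succ k ih =>
      rw [hQ, hη]
      by_cases h : k % n = n - 1
      · rw [if_pos h]
        rw [stmt5_mod_succ_eq n k hn h]
        have hcast : ((k % n : ℕ) : ℝ) = (n:ℝ) - 1 := by
          rw [h]; push_cast [hn]; ring
        rw [hcast] at ih
        have hmul : c * Q k ≤ c * ((n:ℝ) - 1 + A) :=
          mul_le_mul_of_nonneg_left ih hc0.le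
        push_cast
        linarith [hAfix]
      · rw [if_neg h]
        rw [stmt5_mod_succ_ne n k hn h]
        push_cast
        linarith
  intro k
  have h1 := key (k+1)
  have hlt : (k+1) % n < n := Nat.mod_lt _ (by omega)
  have h2' : (((k+1) % n : ℕ) : ℝ) ≤ (n:ℝ) - 1 := by
    have : ((k+1) % n : ℕ) + 1 ≤ n := hlt
    have := (Nat.cast_le (α := ℝ)).mpr this
    push_cast at this
    linarith
  have hA' : (1-c) * A = c*((n:ℝ)-1)+1 := by
    rw [hA]; field_simp
  have hB : (1-c) * ((n:ℝ)/(1-c)) = (n:ℝ) := by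
    field_simp
  have h3 : (n:ℝ) - 1 + A ≤ 1 + (n:ℝ) / (1 - c) := by
    nlinarith [hA', hB]
  linarith
end

section
/- Let g ∈ ℝⁿ with g ≠ 0, let B be a symmetric n×n real matrix, let σ > 0 and f_k ∈ ℝ, and define the cubic regularization model φ₁(α) = f_k − α ‖g‖² + (1/2) α² gᵀBg + (1/3) α³ σ ‖g‖³. Then the stepsize ᾱ = 2‖g‖² / (√((gᵀBg)² + 4σ‖g‖⁵) + gᵀBg) is positive and is the strict global minimizer of φ₁ over (0, ∞): φ₁(ᾱ) < φ₁(α) for every α > 0 with α ≠ ᾱ. (This establishes the approximately optimal stepsize formula (14).) -/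
open scoped RealInnerProductSpace

/-- The approximately optimal stepsize formula (14): the stepsize
`ᾱ = 2‖g‖²/(√((gᵀBg)² + 4σ‖g‖⁵) + gᵀBg)` is positive and is the strict global
minimizer of the cubic regularization model
`φ₁(α) = f_k − α‖g‖² + (1/2)α² gᵀBg + (1/3)α³σ‖g‖³` over `(0, ∞)`. -/
theorem stmt9 (n : ℕ) (g : EuclideanSpace ℝ (Fin n)) (hg : g ≠ 0)
    (B : Matrix (Fin n) (Fin n) ℝ) (hB : B.IsSymm)
    (σ fk : ℝ) (hσ : 0 < σ)
    (φ : ℝ → ℝ)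
    (hφ : ∀ α, φ α = fk - α * ‖g‖ ^ 2 + 1 / 2 * α ^ 2 * ⟪g, Matrix.toEuclideanLin B g⟫
      + 1 / 3 * α ^ 3 * σ * ‖g‖ ^ 3)
    (αb : ℝ)
    (hαb : αb = 2 * ‖g‖ ^ 2 /
      (Real.sqrt (⟪g, Matrix.toEuclideanLin B g⟫ ^ 2 + 4 * σ * ‖g‖ ^ 5)
        + ⟪g, Matrix.toEuclideanLin B g⟫)) :
    0 < αb ∧ ∀ α : ℝ, 0 < α → α ≠ αb → φ αb < φ α := by
  set b : ℝ := ⟪g, Matrix.toEuclideanLin B g⟫ with hbdef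
  have hG : (0:ℝ) < ‖g‖ := norm_pos_iff.mpr hg
  set G : ℝ := ‖g‖ with hGdef
  set D : ℝ := Real.sqrt (b ^ 2 + 4 * σ * G ^ 5) with hDdef
  have hDnn : 0 ≤ D := Real.sqrt_nonneg _
  have hDsq : D ^ 2 = b ^ 2 + 4 * σ * G ^ 5 := by
    rw [hDdef, Real.sq_sqrt]
    nlinarith [sq_nonneg b, pow_pos hG 5]
  have hpos : 0 < D + b := by
    by_contra h
    push_neg at h
    nlinarith [pow_pos hG 5]
  have hne : D + b ≠ 0 := ne_of_gt hpos
  have hαpos : 0 < αb := by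
    rw [hαb]
    exact div_pos (by positivity) hpos
  have hq : αb * (D + b) = 2 * G ^ 2 := by
    rw [hαb]; field_simp
  set s : ℝ := σ * G ^ 3 with hsdef
  have hs : 0 < s := by positivity
  have hkey : s * αb ^ 2 + b * αb = G ^ 2 := by
    have h2 : (s * αb ^ 2 + b * αb - G ^ 2) * (D + b) ^ 2 = 0 := by
      have e1 : αb * (D + b) * (αb * (D + b)) = 2 * G ^ 2 * (2 * G ^ 2) := by
        rw [hq]
      nlinarith [hq, hDsq, e1]
    rcases mul_eq_zero.mp h2 with h | h
    · linarith
    · exact absurd h (pow_ne_zero 2 hne)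
  have hsb : 0 < s * αb + b := by
    by_contra h
    push_neg at h
    nlinarith [pow_pos hG 2]
  refine ⟨hαpos, fun α hα hαne => ?_⟩
  have hE : 0 < s * (α + 2 * αb) / 3 + b / 2 := by nlinarith
  have h4 : 0 < (α - αb) ^ 2 := by
    have : α - αb ≠ 0 := sub_ne_zero.mpr hαne
    positivity
  have hdiff : φ α - φ αb = (α - αb) ^ 2 * (s * (α + 2 * αb) / 3 + b / 2) := by
    rw [hφ, hφ]
    have : G ^ 2 = s * αb ^ 2 + b * αb := hkey.symm
    rw [hsdef] at this
    linear_combination (α - αb) * hkey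
  nlinarith [mul_pos h4 hE]
end

section
/- Let g ∈ ℝⁿ with g ≠ 0, let σ > 0, f_k ∈ ℝ, τ > 0, and let h ∈ ℝⁿ be any vector (representing g(x_k − τ g_k)). Define the model φ̄₂(α) = f_k − α ‖g‖² + (1/2) α² |gᵀ(h − g)|/τ + (1/3) σ α³ ‖g‖³. Then the stepsize ᾱ = 2τ‖g‖² / (√(|gᵀ(h − g)|² + 4τ²σ‖g‖⁵) + |gᵀ(h − g)|) is positive and is the strict global minimizer of φ̄₂ over (0, ∞). (This establishes the first approximately optimal stepsize formula in (18), used when sᵀy ≤ 0.) -/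
open scoped RealInnerProductSpace

/-!
Writing the model as `f - a α + (b/2) α² + (c/3) α³` with `b ≥ 0`, `c > 0`, its derivative
vanishes on `(0, ∞)` exactly at the positive root `ᾱ` of `c α² + b α = a`. Using that identity,
`φ(α) - φ(ᾱ) = (α - ᾱ)² (b/2 + c (α + 2ᾱ)/3)`, which is positive for `α ≥ 0`, `α ≠ ᾱ`.
The stepsize formula is this root in rationalized form, scaled by `τ` so that `b = |gᵀ(h − g)|/τ`.
-/

noncomputable section

def cubicModel (f a b c α : ℝ) : ℝ :=
  f - α * a + 1 / 2 * α ^ 2 * b + c / 3 * α ^ 3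

theorem cubicModel_sub_cubicModel {f a b c x : ℝ} (hx : c * x ^ 2 + b * x = a) (y : ℝ) :
    cubicModel f a b c y - cubicModel f a b c x
      = (y - x) ^ 2 * (b / 2 + c * (y + 2 * x) / 3) := by
  unfold cubicModel
  rw [← hx]
  ring

theorem cubicModel_lt_of_root {f a b c x y : ℝ} (hb : 0 ≤ b) (hc : 0 < c) (hx₀ : 0 < x)
    (hx : c * x ^ 2 + b * x = a) (hy : 0 ≤ y) (hne : y ≠ x) :
    cubicModel f a b c x < cubicModel f a b c y := by
  have hsq : 0 < (y - x) ^ 2 := by positivity [sub_ne_zero.mpr hne]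
  have hfac : 0 < b / 2 + c * (y + 2 * x) / 3 := by positivity
  have := cubicModel_sub_cubicModel (f := f) hx y
  linarith [mul_pos hsq hfac]

def rootStepsize (a c p τ : ℝ) : ℝ :=
  2 * τ * a / (Real.sqrt (p ^ 2 + 4 * τ ^ 2 * a * c) + p)

theorem rootStepsize_pos {a c p τ : ℝ} (ha : 0 < a) (hc : 0 < c) (hp : 0 ≤ p) (hτ : 0 < τ) :
    0 < rootStepsize a c p τ := by
  have : 0 < Real.sqrt (p ^ 2 + 4 * τ ^ 2 * a * c) := Real.sqrt_pos.mpr (by positivity)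
  unfold rootStepsize
  positivity

theorem rootStepsize_isRoot {a c p τ : ℝ} (ha : 0 < a) (hc : 0 < c) (hp : 0 ≤ p) (hτ : 0 < τ) :
    c * rootStepsize a c p τ ^ 2 + p / τ * rootStepsize a c p τ = a := by
  have hS : Real.sqrt (p ^ 2 + 4 * τ ^ 2 * a * c) ^ 2 = p ^ 2 + 4 * τ ^ 2 * a * c :=
    Real.sq_sqrt (by positivity)
  have hSpos : 0 < Real.sqrt (p ^ 2 + 4 * τ ^ 2 * a * c) := Real.sqrt_pos.mpr (by positivity)
  unfold rootStepsize
  generalize Real.sqrt (p ^ 2 + 4 * τ ^ 2 * a * c) = S at hS hSpos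
  have : S + p ≠ 0 := by positivity
  field_simp
  linear_combination -hS

end

/-- The first approximately optimal stepsize formula in (18) (used when
`sᵀy ≤ 0`): with the finite-difference curvature estimate `|gᵀ(h − g)|/τ`,
the stepsize `ᾱ = 2τ‖g‖²/(√(|gᵀ(h − g)|² + 4τ²σ‖g‖⁵) + |gᵀ(h − g)|)` is
positive and is the strict global minimizer over `(0, ∞)` of
`φ̄₂(α) = f_k − α‖g‖² + (1/2)α²|gᵀ(h − g)|/τ + (σ/3)α³‖g‖³`. -/
theorem stmt10 (n : ℕ) (g h : EuclideanSpace ℝ (Fin n)) (hg : g ≠ 0)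
    (σ fk τ : ℝ) (hσ : 0 < σ) (hτ : 0 < τ)
    (φ : ℝ → ℝ)
    (hφ : ∀ α, φ α = fk - α * ‖g‖ ^ 2 + 1 / 2 * α ^ 2 * (|⟪g, h - g⟫| / τ)
      + σ / 3 * α ^ 3 * ‖g‖ ^ 3)
    (αb : ℝ)
    (hαb : αb = 2 * τ * ‖g‖ ^ 2 /
      (Real.sqrt (|⟪g, h - g⟫| ^ 2 + 4 * τ ^ 2 * σ * ‖g‖ ^ 5) + |⟪g, h - g⟫|)) :
    0 < αb ∧ ∀ α : ℝ, 0 < α → α ≠ αb → φ αb < φ α := by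
  set p := |⟪g, h - g⟫|
  have hφ' : ∀ α, φ α = cubicModel fk (‖g‖ ^ 2) (p / τ) (σ * ‖g‖ ^ 3) α := fun α => by
    rw [hφ, cubicModel]; ring
  have hαb' : αb = rootStepsize (‖g‖ ^ 2) (σ * ‖g‖ ^ 3) p τ := by
    rw [hαb, rootStepsize]; ring_nf
  have hgpos : 0 < ‖g‖ := norm_pos_iff.mpr hg
  have ha : 0 < ‖g‖ ^ 2 := by positivity
  have hc : 0 < σ * ‖g‖ ^ 3 := by positivity
  have hp : 0 ≤ p := abs_nonneg _
  subst hαb'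
  refine ⟨rootStepsize_pos ha hc hp hτ, fun α hα hne => ?_⟩
  rw [hφ', hφ']
  exact cubicModel_lt_of_root (by positivity) hc (rootStepsize_pos ha hc hp hτ)
    (rootStepsize_isRoot ha hc hp hτ) hα.le hne
end

section
/- Let s, y, g ∈ ℝⁿ with sᵀy > 0, s ≠ 0 and g ≠ 0, let 0 < η̄ < 0.1, let r̄ ∈ ℝ satisfy |r̄| ≤ η̄ · sᵀy, set ȳ = y + (r̄/‖s‖²) s, let ξ ≥ 1, D = ξ (‖y‖²/(sᵀy)) I, and B = D − (D s sᵀ D)/(sᵀ D s) + (ȳ ȳᵀ)/(sᵀ ȳ). Define the quadratic model φ₃(α) = f_k − α ‖g‖² + (1/2) α² gᵀBg. Then gᵀBg > 0 and the unique global minimizer of φ₃ over ℝ is ᾱ = ‖g‖² / [ ξ (‖y‖²/(sᵀy)) (‖g‖² − (gᵀs)²/‖s‖²) + (gᵀȳ)²/(sᵀȳ) ]. (This establishes the approximately optimal stepsize formula (20) for the quadratic model.) -/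
open Matrix

/-!
With `D = c • 1`, the quadratic form of the modified BFGS matrix is
`gᵀBg = c (‖g‖² − (gᵀs)²/‖s‖²) + (gᵀȳ)²/(sᵀȳ)`. The first summand is `c` times the squared
length of the component of `g` orthogonal to `s`, so it is positive unless `g` is a nonzero
multiple of `s`; in that case the second summand is positive because `sᵀȳ = sᵀy + r̄ > 0`.
Since `gᵀBg > 0`, the model `φ₃` is a strictly convex parabola, minimized exactly at
`‖g‖² / gᵀBg`.
-/

variable {ι K : Type*} [Fintype ι] [Field K] [LinearOrder K] [IsStrictOrderedRing K]

lemma dotProduct_self_nonneg (v : ι → K) : 0 ≤ v ⬝ᵥ v :=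
  Finset.sum_nonneg fun i _ => mul_self_nonneg (v i)

lemma dotProduct_self_pos {v : ι → K} (hv : v ≠ 0) : 0 < v ⬝ᵥ v :=
  (dotProduct_self_nonneg v).lt_of_ne' (dotProduct_self_eq_zero.not.mpr hv)

lemma dotProduct_add_div_smul_self {s : ι → K} (hs : s ≠ 0) (y : ι → K) (r : K) :
    s ⬝ᵥ (y + (r / (s ⬝ᵥ s)) • s) = s ⬝ᵥ y + r := by
  rw [dotProduct_add, dotProduct_smul, smul_eq_mul, div_mul_cancel₀ _ (dotProduct_self_pos hs).ne']

lemma dotProduct_self_sub_orthogonalProjection {s : ι → K} (hs : s ≠ 0) (g : ι → K) :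
    (g - (g ⬝ᵥ s / s ⬝ᵥ s) • s) ⬝ᵥ (g - (g ⬝ᵥ s / s ⬝ᵥ s) • s) =
      g ⬝ᵥ g - (g ⬝ᵥ s) ^ 2 / (s ⬝ᵥ s) := by
  have hss := (dotProduct_self_pos hs).ne'
  simp only [sub_dotProduct, dotProduct_sub, smul_dotProduct, dotProduct_smul, smul_eq_mul,
    dotProduct_comm s g]
  field_simp
  ring

def bfgsUpdate (D : Matrix ι ι K) (s z : ι → K) : Matrix ι ι K :=
  D - (s ⬝ᵥ D *ᵥ s)⁻¹ • vecMulVec (D *ᵥ s) (s ᵥ* D) + (s ⬝ᵥ z)⁻¹ • vecMulVec z z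

lemma dotProduct_bfgsUpdate_smul_one_mulVec [DecidableEq ι] (c : K) (s z g : ι → K) :
    g ⬝ᵥ bfgsUpdate (c • 1) s z *ᵥ g =
      c * (g ⬝ᵥ g - (g ⬝ᵥ s) ^ 2 / (s ⬝ᵥ s)) + (g ⬝ᵥ z) ^ 2 / (s ⬝ᵥ z) := by
  simp only [bfgsUpdate, add_mulVec, sub_mulVec, smul_mulVec, one_mulVec, vecMul_smul,
    vecMul_one, vecMulVec_mulVec, dotProduct_add, dotProduct_sub, dotProduct_smul,
    smul_dotProduct, smul_eq_mul, MulOpposite.smul_eq_mul_unop, MulOpposite.unop_op,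
    dotProduct_comm s g, dotProduct_comm z g]
  -- `(c ‖s‖²)⁻¹ c² = c / ‖s‖²` holds even when `c = 0` or `‖s‖² = 0`
  have hcancel : (c * s ⬝ᵥ s)⁻¹ * (c * g ⬝ᵥ s * (c * g ⬝ᵥ s)) = c * ((g ⬝ᵥ s) ^ 2 / s ⬝ᵥ s) := by
    rcases eq_or_ne c 0 with rfl | hc
    · simp
    · rw [mul_inv]; field_simp
  rw [hcancel]
  ring

lemma residual_mul_add_sq_div_pos {c : K} {g s z : ι → K} (hc : 0 < c) (hsz : 0 < s ⬝ᵥ z)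
    (hg : g ≠ 0) : 0 < c * (g ⬝ᵥ g - (g ⬝ᵥ s) ^ 2 / (s ⬝ᵥ s)) + (g ⬝ᵥ z) ^ 2 / (s ⬝ᵥ z) := by
  have hs : s ≠ 0 := by rintro rfl; simp at hsz
  rw [← dotProduct_self_sub_orthogonalProjection hs]
  set t := g ⬝ᵥ s / s ⬝ᵥ s
  by_cases hp : g - t • s = 0
  · have hgs : g = t • s := sub_eq_zero.mp hp
    have ht : t ≠ 0 := by rintro ht; simp [ht] at hgs; exact hg hgs
    have hgz : g ⬝ᵥ z ≠ 0 := by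
      rw [hgs, smul_dotProduct, smul_eq_mul]; exact mul_ne_zero ht hsz.ne'
    rw [hp, zero_dotProduct, mul_zero, zero_add]
    positivity
  · have := dotProduct_self_pos hp
    positivity

lemma quadratic_lt_of_ne_div {a b f α : K} (ha : 0 < a) (hα : α ≠ b / a) :
    f - b / a * b + 1 / 2 * (b / a) ^ 2 * a < f - α * b + 1 / 2 * α ^ 2 * a := by
  have hsq : 0 < a / 2 * (α - b / a) ^ 2 :=
    mul_pos (half_pos ha) (sq_pos_of_ne_zero (sub_ne_zero.mpr hα))
  have key : f - α * b + 1 / 2 * α ^ 2 * a - (f - b / a * b + 1 / 2 * (b / a) ^ 2 * a) =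
      a / 2 * (α - b / a) ^ 2 := by
    field_simp; ring
  linarith

theorem stmt15_general (n : ℕ) (s y g : Fin n → ℝ) (hsy : 0 < s ⬝ᵥ y)
    (hg : g ≠ 0)
    (η : ℝ) (hη1 : η < 0.1)
    (r : ℝ) (hr : |r| ≤ η * (s ⬝ᵥ y))
    (yb : Fin n → ℝ) (hyb : yb = y + (r / (s ⬝ᵥ s)) • s)
    (ξ : ℝ) (hξ : 1 ≤ ξ)
    (D : Matrix (Fin n) (Fin n) ℝ)
    (hD : D = (ξ * ((y ⬝ᵥ y) / (s ⬝ᵥ y))) • (1 : Matrix (Fin n) (Fin n) ℝ))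
    (B : Matrix (Fin n) (Fin n) ℝ)
    (hB : B = D - (s ⬝ᵥ D.mulVec s)⁻¹ • vecMulVec (D.mulVec s) (D.vecMul s)
      + (s ⬝ᵥ yb)⁻¹ • vecMulVec yb yb)
    (fk : ℝ) (φ : ℝ → ℝ)
    (hφ : ∀ α, φ α = fk - α * (g ⬝ᵥ g) + 1 / 2 * α ^ 2 * (g ⬝ᵥ B.mulVec g))
    (αb : ℝ)
    (hαb : αb = (g ⬝ᵥ g) /
      (ξ * ((y ⬝ᵥ y) / (s ⬝ᵥ y)) * ((g ⬝ᵥ g) - (g ⬝ᵥ s) ^ 2 / (s ⬝ᵥ s))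
        + (g ⬝ᵥ yb) ^ 2 / (s ⬝ᵥ yb))) :
    0 < g ⬝ᵥ B.mulVec g ∧ ∀ α : ℝ, α ≠ αb → φ αb < φ α := by
  have hs : s ≠ 0 := by rintro rfl; simp at hsy
  have hy : y ≠ 0 := by rintro rfl; simp at hsy
  have hc : 0 < ξ * ((y ⬝ᵥ y) / (s ⬝ᵥ y)) := by
    have := dotProduct_self_pos hy
    have : 0 < ξ := by linarith
    positivity
  have hsyb : 0 < s ⬝ᵥ yb := by
    rw [hyb, dotProduct_add_div_smul_self hs]
    nlinarith [neg_abs_le r]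
  have hBg : g ⬝ᵥ B *ᵥ g = ξ * ((y ⬝ᵥ y) / (s ⬝ᵥ y)) * ((g ⬝ᵥ g) - (g ⬝ᵥ s) ^ 2 / (s ⬝ᵥ s))
      + (g ⬝ᵥ yb) ^ 2 / (s ⬝ᵥ yb) := by
    rw [hB, hD]; exact dotProduct_bfgsUpdate_smul_one_mulVec _ s yb g
  have hpos : 0 < g ⬝ᵥ B *ᵥ g := hBg ▸ residual_mul_add_sq_div_pos hc hsyb hg
  refine ⟨hpos, fun α hα => ?_⟩
  rw [← hBg] at hαb
  subst hαb
  rw [hφ, hφ]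
  exact quadratic_lt_of_ne_div hpos hα

/-- The approximately optimal stepsize formula (20) for the quadratic model:
with the modified BFGS matrix `B`, one has `gᵀBg > 0` and the unique global
minimizer over `ℝ` of `φ₃(α) = f_k − α‖g‖² + (1/2)α² gᵀBg` is
`ᾱ = ‖g‖² / [ξ(‖y‖²/(sᵀy))(‖g‖² − (gᵀs)²/‖s‖²) + (gᵀȳ)²/(sᵀȳ)]`. -/
theorem stmt15 (n : ℕ) (s y g : Fin n → ℝ) (hsy : 0 < s ⬝ᵥ y) (hs : s ≠ 0)
    (hg : g ≠ 0)
    (η : ℝ) (hη0 : 0 < η) (hη1 : η < 0.1)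
    (r : ℝ) (hr : |r| ≤ η * (s ⬝ᵥ y))
    (yb : Fin n → ℝ) (hyb : yb = y + (r / (s ⬝ᵥ s)) • s)
    (ξ : ℝ) (hξ : 1 ≤ ξ)
    (D : Matrix (Fin n) (Fin n) ℝ)
    (hD : D = (ξ * ((y ⬝ᵥ y) / (s ⬝ᵥ y))) • (1 : Matrix (Fin n) (Fin n) ℝ))
    (B : Matrix (Fin n) (Fin n) ℝ)
    (hB : B = D - (s ⬝ᵥ D.mulVec s)⁻¹ • vecMulVec (D.mulVec s) (D.vecMul s)
      + (s ⬝ᵥ yb)⁻¹ • vecMulVec yb yb)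
    (fk : ℝ) (φ : ℝ → ℝ)
    (hφ : ∀ α, φ α = fk - α * (g ⬝ᵥ g) + 1 / 2 * α ^ 2 * (g ⬝ᵥ B.mulVec g))
    (αb : ℝ)
    (hαb : αb = (g ⬝ᵥ g) /
      (ξ * ((y ⬝ᵥ y) / (s ⬝ᵥ y)) * ((g ⬝ᵥ g) - (g ⬝ᵥ s) ^ 2 / (s ⬝ᵥ s))
        + (g ⬝ᵥ yb) ^ 2 / (s ⬝ᵥ yb))) :
    0 < g ⬝ᵥ B.mulVec g ∧ ∀ α : ℝ, α ≠ αb → φ αb < φ α :=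
  stmt15_general n s y g hsy hg η hη1 r hr yb hyb ξ hξ D hD B hB fk φ hφ αb hαb
end
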